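/- arXiv:1901.10722 — 6 statements merged into one kernel-verified Lean document; each statement's English description precedes it below -/
import Mathlib

section
/- Let T be a string and i a position, and let s₁ < s₂ < ... < s_g be the lengths of all maximal palindromes of T ending at position i, with differences d_j = s_j − s_{j−1} for j ≥ 2 and d₁ = 0. Then the sequence of differences is non-decreasing: d_{j+1} ≥ d_j for all 1 ≤ j < g. -/
/-- `MaxPalEnd T i s` : the substring of `T` of length `s ≥ 1` ending at
(1-indexed) position `i` is a palindrome that cannot be extended outward. -/
def MaxPalEnd {α : Type*} (T : List α) (i s : ℕ) : Prop :=
  1 ≤ s ∧ s ≤ i ∧ i ≤ T.length ∧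
  (((T.take i).drop (i - s)).reverse = (T.take i).drop (i - s)) ∧
  ¬(s < i ∧ i < T.length ∧ T[i - s - 1]? = T[i]?)

/-!
Let `b < c` be lengths of palindromic suffixes of `T[1..i]` with `c < 2b`. The suffix of
length `c` has period `c - b`, so reflecting its length-`b` palindromic suffix shows that the
suffix of length `m = 2b - c` is a palindrome too, preceded by the same letter as the suffix of
length `b`. Hence if `b` is a maximal palindrome ending at `i` then so is `m`. If the differences
failed to increase at three consecutive lengths `a < b < c`, then `a < m < b` would be the length
of a further maximal palindrome between them.
-/

/-- The word `f` (read as a function of 0-indexed positions) has a palindrome of length `s`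
occupying the positions `i - s, …, i - 1`. -/
def IsPalSuffix {β : Type*} (f : ℕ → β) (i s : ℕ) : Prop :=
  ∀ j < s, f (i - s + j) = f (i - 1 - j)

theorem List.reverse_eq_self_iff_getElem? {β : Type*} {l : List β} :
    l.reverse = l ↔ ∀ j < l.length, l[j]? = l[l.length - 1 - j]? := by
  constructor
  · intro h j hj
    rw [← List.getElem?_reverse hj, h]
  · intro h
    refine List.ext_getElem? fun n => ?_
    by_cases hn : n < l.length
    · rw [List.getElem?_reverse hn, h n hn]
    · rw [List.getElem?_eq_none (by simpa using hn), List.getElem?_eq_none (by omega)]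

theorem reverse_drop_take_eq_self_iff {α : Type*} (T : List α) {i s : ℕ} (hsi : s ≤ i)
    (hiT : i ≤ T.length) :
    ((T.take i).drop (i - s)).reverse = (T.take i).drop (i - s) ↔
      IsPalSuffix (T[·]?) i s := by
  have hlen : ((T.take i).drop (i - s)).length = s := by
    simp only [List.length_drop, List.length_take]; omega
  have hget : ∀ j < s, ((T.take i).drop (i - s))[j]? = T[i - s + j]? := fun j hj => by
    rw [List.getElem?_drop, List.getElem?_take, if_pos (by omega)]
  rw [List.reverse_eq_self_iff_getElem?, hlen]
  refine forall₂_congr fun j hj => ?_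
  rw [hget j hj, hget (s - 1 - j) (by omega), show i - s + (s - 1 - j) = i - 1 - j by omega]

section PalSuffix

variable {β : Type*} {f : ℕ → β} {i b c : ℕ}

theorem IsPalSuffix.periodic (hb : IsPalSuffix f i b) (hc : IsPalSuffix f i c) (hbc : b ≤ c) :
    ∀ j < b, f (i - c + j) = f (i - b + j) := fun j hj => by
  rw [hc j (by omega), hb j hj]

theorem IsPalSuffix.reflect (hb : IsPalSuffix f i b) (hc : IsPalSuffix f i c) (hbc : b < c)
    (hci : c ≤ i) (hcb : c < 2 * b) : IsPalSuffix f i (2 * b - c) := fun j hj => by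
  have hper := hb.periodic hc hbc.le
  calc f (i - (2 * b - c) + j) = f (i - b + (j + (c - b))) := by congr 1; omega
    _ = f (i - c + (j + (c - b))) := (hper _ (by omega)).symm
    _ = f (i - b + j) := by congr 1; omega
    _ = f (i - c + j) := (hper j (by omega)).symm
    _ = f (i - 1 - j) := hc j (by omega)

theorem IsPalSuffix.reflect_preceding (hb : IsPalSuffix f i b) (hc : IsPalSuffix f i c)
    (hbc : b < c) (hci : c ≤ i) (hcb : c < 2 * b) :
    f (i - b - 1) = f (i - (2 * b - c) - 1) := by
  have h := hb.periodic hc hbc.le (c - b - 1) (by omega)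
  rwa [show i - c + (c - b - 1) = i - b - 1 by omega,
    show i - b + (c - b - 1) = i - (2 * b - c) - 1 by omega] at h

end PalSuffix

theorem MaxPalEnd.isPalSuffix {α : Type*} {T : List α} {i s : ℕ} (h : MaxPalEnd T i s) :
    IsPalSuffix (T[·]?) i s :=
  (reverse_drop_take_eq_self_iff T h.2.1 h.2.2.1).1 h.2.2.2.1

theorem MaxPalEnd.of_isPalSuffix {α : Type*} {T : List α} {i b m : ℕ} (hb : MaxPalEnd T i b)
    (hbi : b < i) (hm : IsPalSuffix (T[·]?) i m) (hm0 : 1 ≤ m) (hmb : m < b)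
    (hprec : T[i - b - 1]? = T[i - m - 1]?) : MaxPalEnd T i m := by
  obtain ⟨-, -, hiT, -, hbmax⟩ := hb
  refine ⟨hm0, by omega, hiT, (reverse_drop_take_eq_self_iff T (by omega) hiT).2 hm, ?_⟩
  rintro ⟨-, hiT', hext⟩
  exact hbmax ⟨by omega, hiT', hprec.trans hext⟩

/-- If `s 0 < s 1 < ... < s (g-1)` are the lengths of all maximal palindromes of `T`
ending at position `i`, then the consecutive differences are non-decreasing:
`s (j+2) - s (j+1) ≥ s (j+1) - s j`. -/
theorem maxpal_differences_monotone {α : Type*} (T : List α) (i g : ℕ) (s : ℕ → ℕ)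
    (hmono : ∀ j, j + 1 < g → s j < s (j + 1))
    (hset : ∀ x, MaxPalEnd T i x ↔ ∃ j < g, s j = x) :
    ∀ j, j + 2 < g → 2 * s (j + 1) ≤ s (j + 2) + s j := by
  intro j hj
  by_contra! hlt
  have hstrict : StrictMonoOn s (Set.Iic (g - 1)) :=
    strictMonoOn_Iic_of_lt_succ fun k hk => hmono k (by omega)
  have hb := (hset (s (j + 1))).2 ⟨j + 1, by omega, rfl⟩
  have hc := (hset (s (j + 2))).2 ⟨j + 2, by omega, rfl⟩
  have hbc : s (j + 1) < s (j + 2) := hmono (j + 1) (by omega)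
  have hci := hc.2.1
  obtain ⟨k, hk, hsk⟩ := (hset (2 * s (j + 1) - s (j + 2))).1 <|
    hb.of_isPalSuffix (by omega) (hb.isPalSuffix.reflect hc.isPalSuffix hbc hci (by omega)) (by omega)
      (by omega) (hb.isPalSuffix.reflect_preceding hc.isPalSuffix hbc hci (by omega))
  have hjk : j < k := (hstrict.lt_iff_lt (by simp only [Set.mem_Iic]; omega) (by simp only [Set.mem_Iic]; omega)).1 (by omega)
  have hkj : k < j + 1 := (hstrict.lt_iff_lt (by simp only [Set.mem_Iic]; omega) (by simp only [Set.mem_Iic]; omega)).1 (by omega)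
  omega
end

section
/- The sorted sequence of lengths of maximal palindromes of T ending at a position i can be partitioned into O(log i) arithmetic progressions. -/
namespace MaxPal

section Periods

variable {β : Type*} {g : ℕ → β}

def HasPeriod (g : ℕ → β) (p n : ℕ) : Prop := ∀ j, j + p < n → g j = g (j + p)

def IsPalPrefix (g : ℕ → β) (s : ℕ) : Prop := ∀ j < s, g j = g (s - 1 - j)

theorem HasPeriod.mono {p n m : ℕ} (h : HasPeriod g p n) (hm : m ≤ n) : HasPeriod g p m :=
  fun j hj => h j (by omega)

theorem hasPeriod_self (g : ℕ → β) (n : ℕ) : HasPeriod g n n := fun _ hj => by omega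

theorem HasPeriod.apply_add_mul {p n j : ℕ} (h : HasPeriod g p n) :
    ∀ k, j + k * p < n → g (j + k * p) = g j
  | 0, _ => by simp
  | k + 1, hk => by
    rw [add_mul, one_mul, ← add_assoc] at hk ⊢
    rw [← h _ hk]
    exact h.apply_add_mul k (by omega)

theorem HasPeriod.apply_eq_of_dvd {p v x : ℕ} (h : HasPeriod g p v) (hp : 0 < p) (hxv : x < v)
    (hdvd : p ∣ v - x) : g x = g (v - p) := by
  obtain ⟨k, hk⟩ := hdvd
  have hk₁ : 1 ≤ k := Nat.pos_of_ne_zero (by rintro rfl; omega)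
  have hkp : p ≤ p * k := Nat.le_mul_of_pos_right p hk₁
  have hshift : x + (k - 1) * p = v - p := by
    rw [Nat.sub_mul, one_mul, mul_comm]; omega
  rw [← hshift, h.apply_add_mul (k - 1) (by omega)]

theorem HasPeriod.sub {p q n : ℕ} (hp : HasPeriod g p n) (hq : HasPeriod g q n) (hpq : p ≤ q) :
    HasPeriod g (q - p) (n - p) := by
  intro j hj
  rw [hq j (by omega), hp (j + (q - p)) (by omega), show j + (q - p) + p = j + q by omega]

theorem HasPeriod.of_sub {p d n : ℕ} (hp : HasPeriod g p n) (hd : HasPeriod g d (n - p))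
    (hn : 2 * p + d ≤ n) : HasPeriod g d n := by
  intro j hj
  by_cases hjd : j + d < n - p
  · exact hd j hjd
  · have e₁ := hp (j - p) (by omega)
    have e₂ := hp (j - p + d) (by omega)
    rw [show j - p + p = j by omega] at e₁
    rw [show j - p + d + p = j + d by omega] at e₂
    rw [← e₁, ← e₂, hd (j - p) (by omega)]

/-- The weak form of the Fine–Wilf periodicity lemma. -/
theorem HasPeriod.gcd {p q n : ℕ} (hp : HasPeriod g p n) (hq : HasPeriod g q n)
    (hn : p + q ≤ n) : HasPeriod g (Nat.gcd p q) n := by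
  induction hs : p + q using Nat.strong_induction_on generalizing p q n with
  | _ s ih =>
  wlog hpq : p ≤ q generalizing p q
  · rw [Nat.gcd_comm]; exact this hq hp (by omega) (by omega) (by omega)
  rcases Nat.eq_zero_or_pos p with rfl | hp₀
  · simpa using hq
  rcases hpq.eq_or_lt with rfl | hlt
  · simpa using hp
  have hd : HasPeriod g (Nat.gcd p q) (n - p) := by
    rw [← Nat.gcd_sub_self_right hpq]
    exact ih q (by omega) (hp.mono (by omega)) (hp.sub hq hpq) (by omega) (by omega)
  have hdq : Nat.gcd p q ≤ q - p := by
    rw [← Nat.gcd_sub_self_right hpq]; exact Nat.le_of_dvd (by omega) (Nat.gcd_dvd_right _ _)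
  exact hp.of_sub hd (by omega)

theorem IsPalPrefix.hasPeriod_sub {s t : ℕ} (hs : IsPalPrefix g s) (ht : IsPalPrefix g t)
    (hts : t ≤ s) : HasPeriod g (s - t) s := by
  intro j hj
  rw [ht j (by omega), hs (j + (s - t)) hj]
  congr 1
  omega

theorem IsPalPrefix.sub_of_hasPeriod {s p : ℕ} (hs : IsPalPrefix g s) (hp : HasPeriod g p s) :
    IsPalPrefix g (s - p) := by
  intro j hj
  rw [hs j (by omega), hp (s - p - 1 - j) (by omega)]
  congr 1
  omega

theorem IsPalPrefix.sub_mul {s p : ℕ} (hs : IsPalPrefix g s) (hp : HasPeriod g p s) :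
    ∀ k, IsPalPrefix g (s - k * p)
  | 0 => by simpa using hs
  | k + 1 => by
    rw [add_mul, one_mul, ← Nat.sub_sub]
    exact (hs.sub_mul hp k).sub_of_hasPeriod (hp.mono (by omega))

theorem IsPalPrefix.iff_dvd {v p x : ℕ} (hv : IsPalPrefix g v)
    (hp : IsLeast {p | 0 < p ∧ HasPeriod g p v} p) (hxv : x ≤ v) (hvx : v < 2 * x) :
    IsPalPrefix g x ↔ p ∣ v - x := by
  constructor
  · intro hx
    rcases Nat.eq_zero_or_pos (v - x) with hd | hd
    · rw [hd]; exact dvd_zero p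
    have hpd : p ≤ v - x := hp.2 ⟨hd, hv.hasPeriod_sub hx hxv⟩
    have hgcd := hp.1.2.gcd (hv.hasPeriod_sub hx hxv) (by omega)
    have hle : p ≤ Nat.gcd p (v - x) := hp.2 ⟨Nat.gcd_pos_of_pos_left _ hp.1.1, hgcd⟩
    exact Nat.gcd_eq_left_iff_dvd.mp (le_antisymm (Nat.gcd_le_left _ hp.1.1) hle)
  · rintro ⟨k, hk⟩
    rw [show x = v - k * p by rw [mul_comm, ← hk]; omega]
    exact hv.sub_mul hp.1.2 k

end Periods

section Progressions

def MemAP (ap : ℕ × ℕ × ℕ) (x : ℕ) : Prop := ∃ k < ap.2.2, x = ap.1 + k * ap.2.1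

theorem MemAP.start {ap : ℕ × ℕ × ℕ} {x : ℕ} (h : MemAP ap x) : MemAP ap ap.1 :=
  let ⟨k, hk, _⟩ := h
  ⟨0, by omega, by simp⟩

theorem memAP_single (s x : ℕ) : MemAP (s, 0, 1) x ↔ x = s := by
  simp [MemAP]

theorem memAP_iff_dvd {a v p x : ℕ} (hp : 0 < p) :
    MemAP (v - (v - a) / p * p, p, (v - a) / p) x ↔ a ≤ x ∧ x < v ∧ p ∣ v - x := by
  set K := (v - a) / p
  have hK : K * p ≤ v - a := Nat.div_mul_le_self _ _
  simp only [MemAP]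
  constructor
  · rintro ⟨k, hk, rfl⟩
    have hkK : k * p + p ≤ K * p := by rw [← Nat.succ_mul]; exact Nat.mul_le_mul_right p hk
    refine ⟨by omega, by omega, ⟨K - k, ?_⟩⟩
    rw [mul_comm p, Nat.sub_mul]
    omega
  · rintro ⟨hax, hxv, m, hm⟩
    rw [mul_comm] at hm
    have hm₀ : 0 < m := Nat.pos_of_ne_zero (by rintro rfl; omega)
    have hmK : m ≤ K := (Nat.le_div_iff_mul_le hp).mpr (by omega)
    have : m * p ≤ K * p := Nat.mul_le_mul_right p hmK
    refine ⟨K - m, by omega, ?_⟩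
    rw [Nat.sub_mul]
    omega

theorem exists_mem_filter_memAP_iff {aps : List (ℕ × ℕ × ℕ)} {E : ℕ → Prop} [DecidablePred E]
    (hE : ∀ ap ∈ aps, ∀ x, MemAP ap x → (E x ↔ E ap.1)) (x : ℕ) :
    (∃ ap ∈ aps.filter (fun ap => ¬ E ap.1), MemAP ap x) ↔ (∃ ap ∈ aps, MemAP ap x) ∧ ¬ E x := by
  simp only [List.mem_filter, decide_not, Bool.not_eq_true', decide_eq_false_iff_not]
  constructor
  · rintro ⟨ap, ⟨hap, hE₁⟩, hx⟩
    exact ⟨⟨ap, hap, hx⟩, by rwa [hE ap hap x hx]⟩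
  · rintro ⟨⟨ap, hap, hx⟩, hEx⟩
    exact ⟨ap, ⟨hap, by rwa [← hE ap hap x hx]⟩, hx⟩

theorem exists_memAPs_of_dyadic {P : ℕ → Prop} {n c : ℕ} (hP : ∀ x, P x → 1 ≤ x ∧ x ≤ n)
    (hlevel : ∀ j, ∃ aps : List (ℕ × ℕ × ℕ), aps.length ≤ c ∧
      ∀ x, (P x ∧ 2 ^ j ≤ x ∧ x < 2 ^ (j + 1)) ↔ ∃ ap ∈ aps, MemAP ap x) :
    ∃ aps : List (ℕ × ℕ × ℕ), aps.length ≤ c * (Nat.log 2 n + 1) ∧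
      ∀ x, P x ↔ ∃ ap ∈ aps, MemAP ap x := by
  choose F hFlen hF using hlevel
  refine ⟨(List.range (Nat.log 2 n + 1)).flatMap F, ?_, fun x => ⟨fun hx => ?_, ?_⟩⟩
  · rw [List.length_flatMap, mul_comm, ← smul_eq_mul, ← List.length_range (n := Nat.log 2 n + 1)]
    refine (List.sum_le_card_nsmul _ c ?_).trans (by simp)
    simp only [List.mem_map]
    rintro _ ⟨j, -, rfl⟩
    exact hFlen j
  · have hx₀ : x ≠ 0 := by have := (hP x hx).1; omega
    obtain ⟨ap, hap, hxap⟩ := (hF (Nat.log 2 x) x).mp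
      ⟨hx, Nat.pow_log_le_self 2 hx₀, Nat.lt_pow_succ_log_self (by norm_num) x⟩
    have hlog : Nat.log 2 x < Nat.log 2 n + 1 := Nat.lt_succ_of_le (Nat.log_mono_right (hP x hx).2)
    exact ⟨ap, List.mem_flatMap.mpr ⟨_, List.mem_range.mpr hlog, hap⟩, hxap⟩
  · rintro ⟨ap, hap, hxap⟩
    obtain ⟨j, -, hapj⟩ := List.mem_flatMap.mp hap
    exact ((hF j x).mpr ⟨ap, hapj, hxap⟩).1

end Progressions

section MaximalPalindromes

variable {β : Type*}

/-- With `g` the text read backwards from position `i` and `c` the symbol at position `i + 1`,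
these `x` are the lengths of the maximal palindromes ending at `i`: extending the palindromic
suffix of length `x` by one symbol on each side needs `g x = c`. -/
def IsMaxPalPrefix (g : ℕ → β) (n : ℕ) (c : β) (x : ℕ) : Prop :=
  1 ≤ x ∧ x ≤ n ∧ IsPalPrefix g x ∧ ¬(x < n ∧ g x = c)

theorem exists_isPalPrefix_Ico_iff (g : ℕ → β) (n a : ℕ)
    (hne : ∃ x, (1 ≤ x ∧ x ≤ n ∧ IsPalPrefix g x) ∧ a ≤ x ∧ x < 2 * a) :
    ∃ v p, 0 < p ∧ HasPeriod g p v ∧ ∀ x, ((1 ≤ x ∧ x ≤ n ∧ IsPalPrefix g x) ∧ a ≤ x ∧ x < 2 * a) ↔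
      x = v ∨ (a ≤ x ∧ x < v ∧ p ∣ v - x) := by
  classical
  obtain ⟨x₀, hx₀⟩ := hne
  set S : ℕ → Prop := fun x => (1 ≤ x ∧ x ≤ n ∧ IsPalPrefix g x) ∧ a ≤ x ∧ x < 2 * a
  set v := Nat.findGreatest S (2 * a)
  have hvmax : ∀ x, S x → x ≤ v := fun x hx => Nat.le_findGreatest hx.2.2.le hx
  obtain ⟨⟨hv₁, hvn, hvpal⟩, hav, hva⟩ : S v := Nat.findGreatest_spec hx₀.2.2.le hx₀
  have hper : ∃ p, 0 < p ∧ HasPeriod g p v := ⟨v, hv₁, hasPeriod_self g v⟩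
  have hp : IsLeast {p | 0 < p ∧ HasPeriod g p v} (Nat.find hper) :=
    ⟨Nat.find_spec hper, fun q hq => Nat.find_min' hper hq⟩
  refine ⟨v, Nat.find hper, hp.1.1, hp.1.2, fun x => ⟨fun hx => ?_, ?_⟩⟩
  · rcases (hvmax x hx).eq_or_lt with h | h
    · exact Or.inl h
    · exact Or.inr ⟨hx.2.1, h, (hvpal.iff_dvd hp h.le (by omega)).mp hx.1.2.2⟩
  · rintro (rfl | ⟨hax, hxv, hdvd⟩)
    · exact ⟨⟨hv₁, hvn, hvpal⟩, hav, hva⟩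
    · exact ⟨⟨by omega, by omega, (hvpal.iff_dvd hp hxv.le (by omega)).mpr hdvd⟩, hax, by omega⟩

theorem exists_memAPs_isMaxPalPrefix_Ico (g : ℕ → β) (n : ℕ) (c : β) (a : ℕ) :
    ∃ aps : List (ℕ × ℕ × ℕ), aps.length ≤ 2 ∧
      ∀ x, (IsMaxPalPrefix g n c x ∧ a ≤ x ∧ x < 2 * a) ↔ ∃ ap ∈ aps, MemAP ap x := by
  classical
  by_cases hne : ∃ x, (1 ≤ x ∧ x ≤ n ∧ IsPalPrefix g x) ∧ a ≤ x ∧ x < 2 * a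
  swap
  · refine ⟨[], by simp, fun x => iff_of_false ?_ (by simp)⟩
    exact fun ⟨⟨h₁, h₂, h₃, _⟩, h₄⟩ => hne ⟨x, ⟨h₁, h₂, h₃⟩, h₄⟩
  obtain ⟨v, p, hp, hper, hS⟩ := exists_isPalPrefix_Ico_iff g n a hne
  have hvn : v ≤ n := ((hS v).mpr (Or.inl rfl)).1.2.1
  -- Below `v` the palindromes `v - k * p` are all followed by the same symbol `g (v - p)`.
  have hext : ∀ x, x < v → p ∣ v - x → (x < n ∧ g x = c ↔ g (v - p) = c) := fun x hxv hdvd => by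
    rw [hper.apply_eq_of_dvd hp hxv hdvd]
    exact ⟨And.right, fun h => ⟨by omega, h⟩⟩
  refine ⟨[(v, 0, 1), (v - (v - a) / p * p, p, (v - a) / p)].filter
    (fun ap => ¬(ap.1 < n ∧ g ap.1 = c)), List.length_filter_le _ _, fun x => ?_⟩
  rw [exists_mem_filter_memAP_iff (E := fun y => y < n ∧ g y = c)]
  · simp only [List.mem_cons, List.not_mem_nil, or_false, exists_eq_or_imp, exists_eq_left,
      memAP_single, memAP_iff_dvd hp, ← hS]
    unfold IsMaxPalPrefix
    tauto
  · simp only [List.mem_cons, List.not_mem_nil, or_false, forall_eq_or_imp, forall_eq]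
    refine ⟨fun y hy => by rw [(memAP_single v y).mp hy], fun y hy => ?_⟩
    have hy' := (memAP_iff_dvd hp).mp hy
    have hs := (memAP_iff_dvd hp).mp hy.start
    rw [hext y hy'.2.1 hy'.2.2, hext _ hs.2.1 hs.2.2]

theorem exists_memAPs_isMaxPalPrefix (g : ℕ → β) (n : ℕ) (c : β) :
    ∃ aps : List (ℕ × ℕ × ℕ), aps.length ≤ 2 * (Nat.log 2 n + 1) ∧
      ∀ x, IsMaxPalPrefix g n c x ↔ ∃ ap ∈ aps, MemAP ap x :=
  exists_memAPs_of_dyadic (fun _ hx => ⟨hx.1, hx.2.1⟩) fun j => by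
    simpa only [pow_succ, mul_comm _ 2] using exists_memAPs_isMaxPalPrefix_Ico g n c (2 ^ j)

theorem isPalPrefix_getElem?_iff {l : List β} {x : ℕ} (hx : x ≤ l.length) :
    IsPalPrefix (fun j => l[j]?) x ↔ (l.take x).reverse = l.take x := by
  have hlen : (l.take x).length = x := List.length_take_of_le hx
  rw [List.ext_getElem?_iff]
  refine ⟨fun h j => ?_, fun h j hj => ?_⟩
  · by_cases hj : j < x
    · rw [List.getElem?_reverse (by omega), hlen, List.getElem?_take_of_lt (by omega),
        List.getElem?_take_of_lt hj]
      exact (h j hj).symm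
    · rw [List.getElem?_eq_none_iff.mpr (by rw [List.length_reverse, hlen]; omega),
        List.getElem?_eq_none_iff.mpr (by rw [hlen]; omega)]
  · have := h j
    rw [List.getElem?_reverse (by omega), hlen, List.getElem?_take_of_lt (by omega),
      List.getElem?_take_of_lt hj] at this
    exact this.symm

theorem maxPalEnd_iff {T : List β} {i x : ℕ} (hi : i ≤ T.length) :
    MaxPalEnd T i x ↔ IsMaxPalPrefix (fun j => (T.take i).reverse[j]?) i T[i]? x := by
  have hlen : (T.take i).length = i := List.length_take_of_le hi
  have hpal : x ≤ i → (((T.take i).drop (i - x)).reverse = (T.take i).drop (i - x) ↔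
      IsPalPrefix (fun j => (T.take i).reverse[j]?) x) := fun hx => by
    rw [isPalPrefix_getElem?_iff (by simpa [hlen]), List.take_reverse, hlen, List.reverse_reverse,
      eq_comm]
  have hnext : x < i → (T.take i).reverse[x]? = T[i - x - 1]? := fun hx => by
    rw [List.getElem?_reverse (by omega), hlen, List.getElem?_take_of_lt (by omega)]
    congr 1
    omega
  -- Past the end of `T` the symbol `T[i]?` is `none`, which no symbol of `T` equals.
  have hlt : x < i → T[i - x - 1]? = T[i]? → i < T.length := fun hx he => by
    by_contra hle
    rw [List.getElem?_eq_none_iff.mpr (show T.length ≤ i by omega), List.getElem?_eq_none_iff] at he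
    omega
  unfold MaxPalEnd IsMaxPalPrefix
  beta_reduce
  constructor
  · rintro ⟨h₁, h₂, -, h₃, h₄⟩
    refine ⟨h₁, h₂, (hpal h₂).mp h₃, fun ⟨hx, he⟩ => h₄ ⟨hx, ?_, ?_⟩⟩
    · exact hlt hx (by rwa [← hnext hx])
    · rwa [← hnext hx]
  · rintro ⟨h₁, h₂, h₃, h₄⟩
    exact ⟨h₁, h₂, hi, (hpal h₂).mpr h₃, fun ⟨hx, _, he⟩ => h₄ ⟨hx, by rwa [hnext hx]⟩⟩

end MaximalPalindromes

end MaxPal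

/-- The set of lengths of maximal palindromes of `T` ending at position `i` can be
represented by `O(log i)` arithmetic progressions `⟨s, d, t⟩`
(representing `s, s + d, ..., s + (t-1)d`). -/
theorem maxpal_log_arithmetic_progressions :
    ∃ C : ℕ, ∀ (α : Type) (T : List α) (i : ℕ),
      ∃ aps : List (ℕ × ℕ × ℕ),
        aps.length ≤ C * (Nat.log 2 i + 1) ∧
        ∀ x, MaxPalEnd T i x ↔
          ∃ ap ∈ aps, ∃ k < ap.2.2, x = ap.1 + k * ap.2.1 := by
  refine ⟨2, fun α T i => ?_⟩
  by_cases hi : i ≤ T.length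
  · obtain ⟨aps, hlen, haps⟩ :=
      MaxPal.exists_memAPs_isMaxPalPrefix (fun j => (T.take i).reverse[j]?) i T[i]?
    exact ⟨aps, hlen, fun x => (MaxPal.maxPalEnd_iff hi).trans (haps x)⟩
  · exact ⟨[], by simp, fun x => iff_of_false (fun h => hi h.2.2.1) (by simp)⟩
end

section
/- Let s, s+d, ..., s+(t−1)d with t ≥ 2 be lengths of maximal palindromes of T all ending at position i, forming an arithmetic progression with common difference d. Then d is a period of every one of these maximal palindromes; i.e., for each length s+kd (0 ≤ k ≤ t−1), the substring T[i−(s+kd)+1..i] has period d. -/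
/-- `p` is a period of `S`: `S[m] = S[m+p]` whenever both are defined. -/
def HasPeriod {α : Type*} (S : List α) (p : ℕ) : Prop :=
  ∀ m, m + p < S.length → S[m]? = S[m + p]?

section

variable {α : Type*}

theorem HasPeriod.drop {S : List α} {p : ℕ} (h : HasPeriod S p) (n : ℕ) :
    HasPeriod (S.drop n) p := by
  intro m hm
  rw [List.length_drop] at hm
  simpa only [List.getElem?_drop, Nat.add_assoc] using h (n + m) (by omega)

theorem List.getElem?_eq_getElem?_of_reverse_eq {S : List α} (hS : S.reverse = S) {m : ℕ}
    (hm : m < S.length) : S[m]? = S[S.length - 1 - m]? := by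
  conv_lhs => rw [← hS]
  rw [List.getElem?_reverse hm]

theorem hasPeriod_of_reverse_eq_of_reverse_drop_eq {S : List α} {p : ℕ}
    (hS : S.reverse = S) (hp : (S.drop p).reverse = S.drop p) : HasPeriod S p := by
  intro m hm
  have hlen : (S.drop p).length = S.length - p := List.length_drop
  calc S[m]? = S[S.length - 1 - m]? := List.getElem?_eq_getElem?_of_reverse_eq hS (by omega)
    _ = (S.drop p)[S.length - 1 - m - p]? := by rw [List.getElem?_drop]; congr 1; omega
    _ = (S.drop p)[m]? := by
      rw [List.getElem?_eq_getElem?_of_reverse_eq hp (by omega), hlen]; congr 1; omega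
    _ = S[m + p]? := by rw [List.getElem?_drop, Nat.add_comm]

theorem List.drop_drop_sub_add {W : List α} {i a p : ℕ} (h : a + p ≤ i) :
    (W.drop (i - (a + p))).drop p = W.drop (i - a) := by
  rw [List.drop_drop]; congr 1; omega

end

theorem maxpal_group_period_general {α : Type*} (T : List α) (i s d t : ℕ)
    (ht : 2 ≤ t)
    (hap : ∀ k < t, MaxPalEnd T i (s + k * d)) :
    ∀ k < t, HasPeriod ((T.take i).drop (i - (s + k * d))) d := by
  have hpal (k : ℕ) (hk : k < t) := (hap k hk).2.2.2.1
  have hsuffix (k : ℕ) (hk : k + 1 < t) :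
      ((T.take i).drop (i - (s + (k + 1) * d))).drop d = (T.take i).drop (i - (s + k * d)) := by
    have hle := (hap (k + 1) hk).2.1
    rw [Nat.succ_mul, ← Nat.add_assoc] at hle ⊢
    exact List.drop_drop_sub_add hle
  have hperiod (k : ℕ) (hk : k + 1 < t) :
      HasPeriod ((T.take i).drop (i - (s + (k + 1) * d))) d :=
    hasPeriod_of_reverse_eq_of_reverse_drop_eq (hpal (k + 1) hk)
      (by rw [hsuffix k hk]; exact hpal k (by omega))
  rintro (_ | k) hk
  · rw [← hsuffix 0 (by omega)]
    exact (hperiod 0 (by omega)).drop d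
  · exact hperiod k hk

/-- If the lengths `s, s+d, ..., s+(t-1)d` (with `t ≥ 2`) all are maximal palindromes
of `T` ending at position `i`, then `d` is a period of every one of these palindromes. -/
theorem maxpal_group_period {α : Type*} (T : List α) (i s d t : ℕ)
    (ht : 2 ≤ t) (hd : 1 ≤ d)
    (hap : ∀ k < t, MaxPalEnd T i (s + k * d)) :
    ∀ k < t, HasPeriod ((T.take i).drop (i - (s + k * d))) d :=
  maxpal_group_period_general T i s d t ht hap
end

section
/- Suppose two palindromic suffixes of a string Y of lengths s₁ < s₂ both end at the last position of Y, with s₂ − s₁ = d, and suppose the set of palindromic suffix lengths {s₁, s₁+d, ..., s₁+(t−1)d} = {s+( j−1)d : 1 ≤ j ≤ t} all occur as maximal palindromes ending at that position. Then there exist palindromes u and v with |uv| = d and a non-negative integer p such that the longest of these palindromes equals (uv)^{t+p−1}u and the shortest equals (uv)^p u. -/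
namespace List

variable {α : Type*}

theorem drop_flatten_replicate_add_append {B : List α} {d : ℕ} (hB : B.length = d)
    (j k : ℕ) (u : List α) :
    ((replicate (j + k) B).flatten ++ u).drop (j * d) = (replicate k B).flatten ++ u := by
  rw [replicate_add, flatten_append, append_assoc,
    drop_left' (by simp [hB])]

theorem drop_length_sub_eq_reverse_take {W : List α} (hW : W.reverse = W) (m : ℕ) :
    W.drop (W.length - m) = (W.take m).reverse := by
  rw [reverse_take, hW]

theorem drop_eq_take_of_reverse_eq {W : List α} {d : ℕ} (hdW : d ≤ W.length)
    (hW : W.reverse = W) (hWd : (W.drop d).reverse = W.drop d) :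
    W.drop d = W.take (W.length - d) := by
  have h := drop_length_sub_eq_reverse_take hW (W.length - d)
  rw [Nat.sub_sub_self hdW] at h
  rw [← hWd, h, reverse_reverse]

theorem take_add_eq_take_append_take {W : List α} {d : ℕ}
    (hper : W.drop d = W.take (W.length - d)) {n : ℕ} (hn : d + n ≤ W.length) :
    W.take (d + n) = W.take d ++ W.take n := by
  rw [take_add, hper, take_take, min_eq_left (by omega)]

theorem take_mul_add_eq_flatten_replicate_append {W : List α} {d : ℕ}
    (hper : W.drop d = W.take (W.length - d)) (n : ℕ) :
    ∀ k, k * d + n ≤ W.length → W.take (k * d + n) = (replicate k (W.take d)).flatten ++ W.take n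
  | 0, _ => by simp
  | k + 1, hk => by
    rw [show (k + 1) * d + n = d + (k * d + n) by ring,
      take_add_eq_take_append_take hper (by linarith),
      take_mul_add_eq_flatten_replicate_append hper n k (by linarith),
      replicate_succ, flatten_cons, append_assoc]

theorem eq_flatten_replicate_append_of_drop_eq_take {W : List α} {d : ℕ}
    (hper : W.drop d = W.take (W.length - d)) :
    W = (replicate (W.length / d) (W.take d)).flatten ++ W.take (W.length % d) := by
  conv_lhs => rw [← take_length (l := W), ← Nat.div_add_mod' W.length d]
  exact take_mul_add_eq_flatten_replicate_append hper _ _ (Nat.div_add_mod' W.length d).le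

theorem exists_flatten_replicate_append_of_reverse_eq {W : List α} {d : ℕ} (hd : 0 < d)
    (hdW : d ≤ W.length) (hW : W.reverse = W) (hWd : (W.drop d).reverse = W.drop d) :
    ∃ u v : List α, u.reverse = u ∧ v.reverse = v ∧ (u ++ v).length = d ∧
      W = (replicate (W.length / d) (u ++ v)).flatten ++ u := by
  set k := W.length / d
  set r := W.length % d
  have hr : r < d := Nat.mod_lt _ hd
  have hk : 1 ≤ k := (Nat.one_le_div_iff hd).2 hdW
  set u := W.take r
  set v := (W.take d).drop r
  have huv : u ++ v = W.take d := by
    rw [← take_append_drop r (W.take d), take_take, min_eq_left hr.le]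
  have hlen : (u ++ v).length = d := by
    rw [huv, length_take, min_eq_left hdW]
  have hdecomp : W = (replicate k (u ++ v)).flatten ++ u := by
    rw [huv]
    exact eq_flatten_replicate_append_of_drop_eq_take (drop_eq_take_of_reverse_eq hdW hW hWd)
  have hlenW : k * d + r = W.length := Nat.div_add_mod' W.length d
  have hu : u.reverse = u := by
    have hsuffix : W.drop (k * d) = u := by
      conv_lhs => rw [hdecomp]
      simpa using drop_flatten_replicate_add_append hlen k 0 u
    rw [← drop_length_sub_eq_reverse_take hW r, show W.length - r = k * d by omega, hsuffix]
  have hv : v.reverse = v := by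
    obtain ⟨j, hj⟩ : ∃ j, k = j + 1 := ⟨k - 1, by omega⟩
    rw [hj] at hdecomp hlenW
    have hsuffix : W.drop (W.length - d) = v ++ u := by
      rw [show W.length - d = j * d + r by rw [← hlenW]; ring_nf; omega, ← drop_drop]
      conv_lhs => rw [hdecomp]
      rw [drop_flatten_replicate_add_append hlen j 1, replicate_one, flatten_singleton,
        append_assoc, drop_left' (length_take_of_le (by omega))]
    have h := drop_length_sub_eq_reverse_take hW d
    rw [hsuffix, ← huv, reverse_append, hu] at h
    exact (append_cancel_right h).symm
  exact ⟨u, v, hu, hv, hlen, hdecomp⟩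

end List

theorem MaxPalEnd.reverse_drop_eq {α : Type*} {T : List α} {s : ℕ} (h : MaxPalEnd T T.length s) :
    (T.drop (T.length - s)).reverse = T.drop (T.length - s) := by
  simpa using h.2.2.2.1

/-- If the lengths `s + (j-1)d`, `1 ≤ j ≤ t` (with `t ≥ 2`, `d ≥ 1`) form a group of
maximal palindromes (palindromic suffixes) of `Y` ending at its last position, then
there exist palindromes `u, v` with `|uv| = d` and `p ≥ 0` such that the longest of
them is `(uv)^{t+p-1} u` and the shortest is `(uv)^p u`. -/
theorem maxpal_group_structure {α : Type*} (Y : List α) (s d t : ℕ)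
    (hd : 1 ≤ d) (ht : 2 ≤ t)
    (hall : ∀ j, 1 ≤ j → j ≤ t → MaxPalEnd Y Y.length (s + (j - 1) * d)) :
    ∃ (u v : List α) (p : ℕ),
      u.reverse = u ∧ v.reverse = v ∧ (u ++ v).length = d ∧
      Y.drop (Y.length - (s + (t - 1) * d)) =
        (List.replicate (t + p - 1) (u ++ v)).flatten ++ u ∧
      Y.drop (Y.length - s) = (List.replicate p (u ++ v)).flatten ++ u := by
  obtain ⟨t, rfl⟩ : ∃ t', t = t' + 2 := ⟨t - 2, by omega⟩
  have hlongest : MaxPalEnd Y Y.length (s + (t + 1) * d) := hall (t + 2) (by omega) le_rfl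
  have hnext : MaxPalEnd Y Y.length (s + t * d) := hall (t + 1) (by omega) (by omega)
  rw [show t + 2 - 1 = t + 1 from rfl]
  have hN : s + (t + 1) * d ≤ Y.length := hlongest.2.1
  set W := Y.drop (Y.length - (s + (t + 1) * d))
  have hWlen : W.length = s + (t + 1) * d := by
    simp only [W, List.length_drop]
    omega
  have hWd : W.drop d = Y.drop (Y.length - (s + t * d)) := by
    rw [List.drop_drop]
    congr 1
    rw [add_one_mul] at hN ⊢
    omega
  obtain ⟨u, v, hu, hv, hlen, hW⟩ := List.exists_flatten_replicate_append_of_reverse_eq (W := W) hd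
    (by rw [hWlen]; nlinarith) hlongest.reverse_drop_eq (hWd ▸ hnext.reverse_drop_eq)
  have hk : W.length / d = (t + 1) + s / d := by
    rw [hWlen, Nat.add_mul_div_right _ _ hd, add_comm]
  refine ⟨u, v, s / d, hu, hv, hlen, ?_, ?_⟩
  · rw [show t + 2 + s / d - 1 = W.length / d from Nat.sub_eq_of_eq_add (by rw [hk]; ring)]
    exact hW
  · have hshortest : Y.drop (Y.length - s) = W.drop ((t + 1) * d) := by
      rw [List.drop_drop]
      congr 1
      omega
    rw [hshortest, hW, hk, List.drop_flatten_replicate_add_append hlen]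
end

section
/- Let T be a string and i a position. If P₁ and P₂ are maximal palindromes of T ending at position i with |P₁| < |P₂| ≤ 2|P₁|, then |P₂| − |P₁| is a period of P₂. -/
theorem List.getElem?_eq_getElem?_length_sub_of_reverse_eq {α : Type*} {L : List α}
    (h : L.reverse = L) {k : ℕ} (hk : k < L.length) : L[k]? = L[L.length - 1 - k]? := by
  rw [← List.getElem?_reverse hk, h]

theorem hasPeriod_length_sub_of_reverse_eq_of_suffix {α : Type*} {S P : List α}
    (hS : S.reverse = S) (hP : P.reverse = P) (hPS : P <:+ S) :
    HasPeriod S (S.length - P.length) := by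
  intro m hm
  set p := S.length - P.length
  have hlen : P.length ≤ S.length := hPS.length_le
  have hm' : m < P.length := by omega
  have hP_get : ∀ j, P[j]? = S[p + j]? := by
    intro j
    rw [List.suffix_iff_eq_drop.mp hPS, List.getElem?_drop]
  calc S[m]? = S[S.length - 1 - m]? :=
        List.getElem?_eq_getElem?_length_sub_of_reverse_eq hS (by omega)
    _ = P[P.length - 1 - m]? := by rw [hP_get]; congr 1; omega
    _ = P[m]? := (List.getElem?_eq_getElem?_length_sub_of_reverse_eq hP hm').symm
    _ = S[m + p]? := by rw [hP_get, Nat.add_comm]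

theorem maxpal_close_lengths_period_general {α : Type*} (T : List α) (i s₁ s₂ : ℕ)
    (h1 : MaxPalEnd T i s₁) (h2 : MaxPalEnd T i s₂)
    (hlt : s₁ < s₂) :
    HasPeriod ((T.take i).drop (i - s₂)) (s₂ - s₁) := by
  obtain ⟨-, hs₁i, hiT, hpal₁, -⟩ := h1
  obtain ⟨-, hs₂i, -, hpal₂, -⟩ := h2
  have hlen : ∀ s ≤ i, ((T.take i).drop (i - s)).length = s := by
    intro s hs
    simp only [List.length_drop, List.length_take]
    omega
  have hsuffix : (T.take i).drop (i - s₁) <:+ (T.take i).drop (i - s₂) :=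
    List.drop_suffix_drop_left _ (by omega)
  simpa only [hlen s₁ hs₁i, hlen s₂ hs₂i] using
    hasPeriod_length_sub_of_reverse_eq_of_suffix hpal₂ hpal₁ hsuffix

/-- If `P₁, P₂` are maximal palindromes of `T` ending at position `i` with
`|P₁| < |P₂| ≤ 2|P₁|`, then `|P₂| - |P₁|` is a period of `P₂`. -/
theorem maxpal_close_lengths_period {α : Type*} (T : List α) (i s₁ s₂ : ℕ)
    (h1 : MaxPalEnd T i s₁) (h2 : MaxPalEnd T i s₂)
    (hlt : s₁ < s₂) (hle : s₂ ≤ 2 * s₁) :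
    HasPeriod ((T.take i).drop (i - s₂)) (s₂ - s₁) :=
  maxpal_close_lengths_period_general T i s₁ s₂ h1 h2 hlt
end

section
/- Let u, v be strings such that uvu and (uv)²u are palindromes, and let w be a nonempty proper prefix of u such that (uv)²w is a suffix of (uv)²u. Then (uv)²w is a palindrome and |(uv)²w| > |uvu|. -/
/-! A word that is both a prefix and a suffix of a palindrome is a palindrome, since reversal
swaps its two occurrences. Because `w` is a prefix of `u`, the word `(uv)²w` is a prefix of
`(uv)²u`; by hypothesis it is also a suffix, hence a palindrome. It is longer than `uvu` as soon
as `w` is nonempty. -/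

theorem List.reverse_eq_of_isPrefix_of_isSuffix {α : Type*} {l x : List α}
    (hl : l.reverse = l) (hpre : x <+: l) (hsuf : x <:+ l) : x.reverse = x := by
  have hrev : x.reverse <+: l := hl ▸ hsuf.reverse
  exact (List.prefix_of_prefix_length_le hrev hpre (by simp)).eq_of_length (by simp)

theorem uvuvw_palindrome_longer_general {α : Type*} (u v w : List α)
    (hpal2 : (u ++ v ++ u ++ v ++ u).reverse = u ++ v ++ u ++ v ++ u)
    (hw_ne : w ≠ []) (hw_pre : w <+: u)
    (hsuf : (u ++ v ++ u ++ v ++ w) <:+ (u ++ v ++ u ++ v ++ u)) :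
    (u ++ v ++ u ++ v ++ w).reverse = u ++ v ++ u ++ v ++ w ∧
    (u ++ v ++ u).length < (u ++ v ++ u ++ v ++ w).length := by
  have hpre : (u ++ v ++ u ++ v ++ w) <+: (u ++ v ++ u ++ v ++ u) :=
    List.prefix_append_right_inj _ |>.mpr hw_pre
  refine ⟨List.reverse_eq_of_isPrefix_of_isSuffix hpal2 hpre hsuf, ?_⟩
  have hw_pos : 0 < w.length := List.length_pos_iff.mpr hw_ne
  simp only [List.length_append]
  omega

/-- If `uvu` and `(uv)²u` are palindromes and `w` is a nonempty proper prefix of `u`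
such that `(uv)²w` is a suffix of `(uv)²u`, then `(uv)²w` is a palindrome and
`|(uv)²w| > |uvu|`. -/
theorem uvuvw_palindrome_longer {α : Type*} (u v w : List α)
    (hpal1 : (u ++ v ++ u).reverse = u ++ v ++ u)
    (hpal2 : (u ++ v ++ u ++ v ++ u).reverse = u ++ v ++ u ++ v ++ u)
    (hw_ne : w ≠ []) (hw_pre : w <+: u) (hw_lt : w.length < u.length)
    (hsuf : (u ++ v ++ u ++ v ++ w) <:+ (u ++ v ++ u ++ v ++ u)) :
    (u ++ v ++ u ++ v ++ w).reverse = u ++ v ++ u ++ v ++ w ∧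
    (u ++ v ++ u).length < (u ++ v ++ u ++ v ++ w).length :=
  uvuvw_palindrome_longer_general u v w hpal2 hw_ne hw_pre hsuf
end
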